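/- arXiv:1403.8109 — 2 statements merged into one kernel-verified Lean document; each statement's English description precedes it below -/
import Mathlib

section
/- For the cycle graph C_n with n ≥ 3, the minimum over all bijective labelings f : V(C_n) → {1, ..., n} of the maturity weight Σ_{uv ∈ E(C_n)} |f(u) - f(v)| equals 2(n - 1). -/
/-!
Going once around the cycle from the vertex labelled `1`, the walk reaches the vertex labelled
`n` and comes back; by the triangle inequality each of the two arcs contributes at least `n - 1`
to the weight. The natural labelling `i ↦ i + 1` attains `2 (n - 1)`: it has `n - 1` edges of
weight `1` and the closing edge of weight `n - 1`.
-/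

open scoped Classical

/-- The maturity weight of a graph `G` under a vertex labeling `f`:
the sum over all edges of the absolute difference of endpoint labels. -/
noncomputable def mw {V : Type*} [Fintype V] (G : SimpleGraph V) (f : V → ℕ) : ℕ :=
  ∑ e ∈ G.edgeSet.toFinset,
    Sym2.lift ⟨fun u v => ((f u : ℤ) - (f v : ℤ)).natAbs, fun u v => by dsimp only; omega⟩ e

open Finset SimpleGraph

section CycleVariation

variable {α : Type*} [AddCommGroup α] [LinearOrder α] [IsOrderedAddMonoid α]

theorem abs_sub_le_sum_Ico_abs_sub (g : ℕ → α) {k l : ℕ} (hkl : k ≤ l) :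
    |g l - g k| ≤ ∑ j ∈ Ico k l, |g (j + 1) - g j| := by
  rw [← sum_Ico_sub g hkl]
  exact abs_sum_le_sum_abs _ _

open Fin.NatCast in
theorem two_nsmul_abs_sub_le_sum_abs_sub_add_one {n : ℕ} [NeZero n] (g : Fin n → α)
    (a b : Fin n) : 2 • |g b - g a| ≤ ∑ i, |g (i + 1) - g i| := by
  set h : ℕ → α := fun j => g (a + j)
  have hsum : ∑ i, |g (i + 1) - g i| = ∑ j ∈ range n, |h (j + 1) - h j| := by
    rw [← Fin.sum_univ_eq_sum_range, ← Equiv.sum_comp (Equiv.addLeft a)]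
    simp [h, add_assoc]
  set d := (b - a).val
  have hd : h d = g b := by simp [h, d]
  have h0 : h 0 = g a := by simp [h]
  have hn : h n = g a := by simp [h]
  rw [hsum, range_eq_Ico, ← sum_Ico_consecutive _ (Nat.zero_le d) (b - a).isLt.le, two_nsmul]
  calc |g b - g a| + |g b - g a| = |h d - h 0| + |h n - h d| := by
        rw [hd, h0, hn, abs_sub_comm (g a)]
    _ ≤ _ := add_le_add (abs_sub_le_sum_Ico_abs_sub h (Nat.zero_le d))
        (abs_sub_le_sum_Ico_abs_sub h (b - a).isLt.le)

end CycleVariation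

theorem mw_eq_sum_of_edgeSet_eq_range {V ι : Type*} [Fintype V] [Fintype ι]
    {G : SimpleGraph V} {u v : ι → V} (hinj : Function.Injective fun i => s(u i, v i))
    (hG : G.edgeSet = Set.range fun i => s(u i, v i)) (f : V → ℕ) :
    (mw G f : ℤ) = ∑ i, |(f (u i) : ℤ) - f (v i)| := by
  rw [mw, Set.toFinset_congr hG, Set.toFinset_range, sum_image hinj.injOn]
  simp

section CycleGraph

variable {n : ℕ} [NeZero n]

theorem cycleGraph_edgeSet (hn : 2 ≤ n) :
    (cycleGraph n).edgeSet = Set.range fun i : Fin n => s(i + 1, i) := by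
  obtain ⟨m, rfl⟩ : ∃ m, n = m + 2 := ⟨n - 2, by omega⟩
  ext e
  induction e with
  | h u v =>
    simp only [mem_edgeSet, cycleGraph_adj, Set.mem_range, sub_eq_iff_eq_add, Sym2.eq_iff]
    constructor
    · rintro (rfl | rfl)
      exacts [⟨v, Or.inl ⟨add_comm _ _, rfl⟩⟩, ⟨u, Or.inr ⟨add_comm _ _, rfl⟩⟩]
    · rintro ⟨i, ⟨rfl, rfl⟩ | ⟨rfl, rfl⟩⟩
      exacts [Or.inl (add_comm _ _), Or.inr (add_comm _ _)]

theorem injective_sym2Mk_add_one (hn : 3 ≤ n) :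
    Function.Injective fun i : Fin n => s(i + 1, i) := by
  intro i j hij
  rcases Sym2.eq_iff.mp hij with ⟨-, rfl⟩ | ⟨rfl, hi⟩
  · rfl
  · have h2 : (1 + 1 : Fin n) = 0 := add_eq_left.mp ((add_assoc i 1 1).symm.trans hi.symm)
    obtain ⟨m, rfl⟩ : ∃ m, n = m + 3 := ⟨n - 3, by omega⟩
    simp [Fin.ext_iff, Fin.val_add, Nat.mod_eq_of_lt] at h2

theorem mw_cycleGraph (hn : 3 ≤ n) (f : Fin n → ℕ) :
    (mw (cycleGraph n) f : ℤ) = ∑ i, |(f (i + 1) : ℤ) - f i| :=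
  mw_eq_sum_of_edgeSet_eq_range (injective_sym2Mk_add_one hn) (cycleGraph_edgeSet (by omega)) f

end CycleGraph

theorem sum_abs_val_add_one_sub_val (m : ℕ) :
    ∑ i : Fin (m + 1), |((i + 1 : Fin (m + 1)) : ℤ) - (i : ℕ)| = 2 * m := by
  rw [Fin.sum_univ_castSucc, Fin.last_add_one]
  simp [Fin.coeSucc_eq_succ]
  ring

theorem stmt_10 {n : ℕ} (hn : 3 ≤ n) :
    IsLeast {m | ∃ f : Fin n ≃ Fin n,
      mw (SimpleGraph.cycleGraph n) (fun v => (f v : ℕ) + 1) = m} (2 * (n - 1)) := by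
  obtain ⟨m, rfl⟩ : ∃ m, n = m + 1 := ⟨n - 1, by omega⟩
  have hmw (f : Fin (m + 1) ≃ Fin (m + 1)) :
      (mw (cycleGraph (m + 1)) (fun v => (f v : ℕ) + 1) : ℤ) =
        ∑ i, |((f (i + 1) : ℕ) : ℤ) - (f i : ℕ)| := by
    simp [mw_cycleGraph hn]
  refine ⟨⟨Equiv.refl _, ?_⟩, ?_⟩
  · zify
    rw [hmw]
    simpa using sum_abs_val_add_one_sub_val m
  · rintro _ ⟨f, rfl⟩
    have hvar := two_nsmul_abs_sub_le_sum_abs_sub_add_one (fun i => ((f i : ℕ) : ℤ))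
      (f.symm 0) (f.symm (Fin.last m))
    zify
    rw [hmw]
    simpa using hvar
end

section
/- For the star graph K_{1,n} with n ≥ 2, the minimum over all bijective labelings f : V(K_{1,n}) → {1, ..., n+1} of the maturity weight Σ_{uv ∈ E(K_{1,n})} |f(u) - f(v)| equals ⌊(n+1)²/4⌋; explicitly, it equals 2·Σ_{i=1}^{⌈(n+1)/2⌉-1} i + ⌈(n+1)/2⌉ when n is odd, and 2·Σ_{i=1}^{⌈(n+1)/2⌉-1} i when n is even. -/
/-!
Only the label `c` of the centre matters: the leaves carry all the other labels, so (with labels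
shifted to `0, …, n`) the weight is `∑_{k ≤ n} |c - k| = T c + T (n - c)`, `T` the triangular
numbers. Hence twice the weight is `c² + (n - c)² + n ≥ n² / 2 + n`, i.e. `4 · weight + 1 ≥ (n + 1)²`,
and `c = ⌊n / 2⌋` attains `⌊(n + 1)² / 4⌋`.
-/

open scoped Classical

open Finset

theorem mw_completeBipartiteGraph {α β : Type*} [Fintype α] [Fintype β] (f : α ⊕ β → ℕ) :
    mw (completeBipartiteGraph α β) f =
      ∑ x : α × β, ((f (.inl x.1) : ℤ) - f (.inr x.2)).natAbs := by
  have hinj : Function.Injective fun x : α × β ↦ s(Sum.inl x.1, Sum.inr x.2) := by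
    rintro ⟨a, b⟩ ⟨a', b'⟩ h
    simpa [Sym2.eq_iff] using h
  rw [mw, Set.toFinset_congr SimpleGraph.edgeSet_completeBipartiteGraph, Set.toFinset_range,
    sum_image fun x _ y _ h ↦ hinj h]
  rfl

theorem mw_star {β : Type*} [Fintype β] (f : Fin 1 ⊕ β → ℕ) :
    mw (completeBipartiteGraph (Fin 1) β) f =
      ∑ j : β, ((f (.inl 0) : ℤ) - f (.inr j)).natAbs := by
  rw [mw_completeBipartiteGraph, Fintype.sum_prod_type, Fintype.sum_unique]
  rfl

theorem mw_star_equiv {β : Type*} [Fintype β] {N : ℕ} (f : Fin 1 ⊕ β ≃ Fin N) :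
    mw (completeBipartiteGraph (Fin 1) β) (fun v ↦ (f v : ℕ) + 1) =
      ∑ k ∈ range N, (((f (.inl 0) : ℕ) : ℤ) - k).natAbs := by
  set g : ℕ → ℕ := fun k ↦ (((f (.inl 0) : ℕ) : ℤ) - k).natAbs
  have hsum : ∑ v, g (f v) = ∑ k ∈ range N, g k := by
    rw [f.sum_comp (fun k : Fin N ↦ g k), Fin.sum_univ_eq_sum_range]
  rw [mw_star, ← hsum, Fintype.sum_sum_type, Fin.sum_univ_one]
  simp [g]

theorem two_mul_sum_range_natAbs_sub {c n : ℕ} (h : c ≤ n) :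
    2 * ∑ k ∈ range (n + 1), ((c : ℤ) - k).natAbs = c * (c + 1) + (n - c) * (n - c + 1) := by
  induction n, h using Nat.le_induction with
  | base =>
    have : ∑ k ∈ range (c + 1), ((c : ℤ) - k).natAbs = ∑ k ∈ range (c + 1), k := by
      rw [← sum_range_reflect]
      refine sum_congr rfl fun k hk ↦ ?_
      have := mem_range.1 hk
      omega
    rw [this, mul_comm, sum_range_id_mul_two]
    simp [mul_comm]
  | succ n hcn ih =>
    rw [sum_range_succ, mul_add, ih, Int.natAbs_natCast_sub_natCast_of_le (by omega),
      show n + 1 - c = n - c + 1 by omega]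
    ring

theorem sq_succ_div_four_le_sum_range_natAbs_sub {c n : ℕ} (h : c ≤ n) :
    (n + 1) ^ 2 / 4 ≤ ∑ k ∈ range (n + 1), ((c : ℤ) - k).natAbs := by
  have hsum := two_mul_sum_range_natAbs_sub h
  obtain ⟨d, rfl⟩ := Nat.exists_eq_add_of_le h
  rw [Nat.add_sub_cancel_left] at hsum
  have : (c + d + 1) ^ 2 ≤ 4 * ∑ k ∈ range (c + d + 1), ((c : ℤ) - k).natAbs + 1 := by
    nlinarith [sq_nonneg ((c : ℤ) - d)]
  omega

theorem sum_range_natAbs_half_sub (n : ℕ) :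
    ∑ k ∈ range (n + 1), (((n / 2 : ℕ) : ℤ) - k).natAbs = (n + 1) ^ 2 / 4 := by
  have := two_mul_sum_range_natAbs_sub (Nat.div_le_self n 2)
  rcases Nat.even_or_odd' n with ⟨m, rfl | rfl⟩
  · rw [show 2 * m / 2 = m by omega] at this ⊢
    rw [show 2 * m - m = m by omega] at this
    rw [show (2 * m + 1) ^ 2 = 4 * (m * (m + 1)) + 1 by ring]
    omega
  · rw [show (2 * m + 1) / 2 = m by omega] at this ⊢
    rw [show 2 * m + 1 - m = m + 1 by omega] at this
    rw [show m * (m + 1) + (m + 1) * (m + 1 + 1) = 2 * ((m + 1) * (m + 1)) by ring] at this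
    rw [show (2 * m + 1 + 1) ^ 2 = 4 * ((m + 1) * (m + 1)) by ring]
    omega

theorem two_mul_sum_Icc_one_id (t : ℕ) : 2 * ∑ i ∈ Icc 1 t, i = t * (t + 1) := by
  induction t with
  | zero => simp
  | succ t ih =>
    rw [sum_Icc_succ_top (by omega), mul_add, ih]
    ring

theorem exists_equiv_apply_eq_of_card_eq {α β : Type*} [Fintype α] [Fintype β] [DecidableEq β]
    (h : Fintype.card α = Fintype.card β) (a : α) (b : β) : ∃ f : α ≃ β, f a = b := by
  let e := Fintype.equivOfCardEq h
  exact ⟨e.trans (Equiv.swap (e a) b), by simp⟩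

theorem stmt_13_general {n : ℕ} :
    IsLeast {m | ∃ f : (Fin 1 ⊕ Fin n) ≃ Fin (n + 1),
      mw (completeBipartiteGraph (Fin 1) (Fin n)) (fun v => (f v : ℕ) + 1) = m}
      ((n + 1) ^ 2 / 4) ∧
    (Odd n → (n + 1) ^ 2 / 4 =
      2 * ∑ i ∈ Finset.Icc 1 ((n + 2) / 2 - 1), i + (n + 2) / 2) ∧
    (Even n → (n + 1) ^ 2 / 4 = 2 * ∑ i ∈ Finset.Icc 1 ((n + 2) / 2 - 1), i) := by
  refine ⟨⟨?_, ?_⟩, ?_, ?_⟩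
  · obtain ⟨f, hf⟩ := exists_equiv_apply_eq_of_card_eq (by simp [add_comm])
      (Sum.inl 0 : Fin 1 ⊕ Fin n) (⟨n / 2, by omega⟩ : Fin (n + 1))
    exact ⟨f, by rw [mw_star_equiv, hf, sum_range_natAbs_half_sub]⟩
  · rintro _ ⟨f, rfl⟩
    rw [mw_star_equiv]
    exact sq_succ_div_four_le_sum_range_natAbs_sub (Nat.lt_succ_iff.1 (f (.inl 0)).isLt)
  · rintro ⟨m, rfl⟩
    have := two_mul_sum_Icc_one_id m
    rw [show (2 * m + 1 + 2) / 2 = m + 1 by omega, Nat.add_sub_cancel,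
      show (2 * m + 1 + 1) ^ 2 = 4 * (m * (m + 1)) + 4 * (m + 1) by ring]
    omega
  · rintro ⟨m, rfl⟩
    have := two_mul_sum_Icc_one_id m
    rw [show (m + m + 2) / 2 - 1 = m by omega,
      show (m + m + 1) ^ 2 = 4 * (m * (m + 1)) + 1 by ring]
    omega

theorem stmt_13 {n : ℕ} (hn : 2 ≤ n) :
    IsLeast {m | ∃ f : (Fin 1 ⊕ Fin n) ≃ Fin (n + 1),
      mw (completeBipartiteGraph (Fin 1) (Fin n)) (fun v => (f v : ℕ) + 1) = m}
      ((n + 1) ^ 2 / 4) ∧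
    (Odd n → (n + 1) ^ 2 / 4 =
      2 * ∑ i ∈ Finset.Icc 1 ((n + 2) / 2 - 1), i + (n + 2) / 2) ∧
    (Even n → (n + 1) ^ 2 / 4 = 2 * ∑ i ∈ Finset.Icc 1 ((n + 2) / 2 - 1), i) :=
  stmt_13_general
end
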